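/- arXiv:1205.3457 — 9 statements merged into one kernel-verified Lean document; each statement's English description precedes it below -/
import Mathlib

section
/- Let k be a field of characteristic p > 0. Then the maximal perfect subfield k^{p^∞} is algebraically closed in k; that is, every element of k that is algebraic over k^{p^∞} already belongs to k^{p^∞}. -/
/-!
Every perfect subfield of `k` is contained in each `k^{pⁿ}`, hence in `k^{p^∞}`; and `k^{p^∞}` is
itself perfect. If `x` is algebraic over `k^{p^∞}`, then `k^{p^∞}(x)` is an algebraic extension of
a perfect field, hence perfect, hence contained in `k^{p^∞}`.
-/

/-- For a field `k` of characteristic `p > 0`, the maximal perfect subfield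
`k^{p^∞} = ⋂ₙ k^{pⁿ}`, where `k^{pⁿ}` is the image of the `n`-fold Frobenius `x ↦ x^{pⁿ}`. -/
noncomputable def maximalPerfectSubfield (p : ℕ) (k : Type*) [Field k] [Fact p.Prime]
    [CharP k p] : Subfield k :=
  ⨅ n : ℕ, (iterateFrobenius k p n).fieldRange

namespace maximalPerfectSubfield

variable (p : ℕ) [Fact p.Prime] {k : Type*} [Field k] [CharP k p]

theorem mem_iff {x : k} :
    x ∈ maximalPerfectSubfield p k ↔ ∀ n : ℕ, ∃ y : k, y ^ p ^ n = x := by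
  simp only [maximalPerfectSubfield, Subfield.mem_iInf, RingHom.mem_fieldRange,
    iterateFrobenius_def]

theorem le_of_perfectField (L : Subfield k) [PerfectField L] :
    L ≤ maximalPerfectSubfield p k := fun x hx ↦ (mem_iff p).2 fun n ↦ by
  obtain ⟨y, hy⟩ := (bijective_iterateFrobenius L p n).2 ⟨x, hx⟩
  exact ⟨y, by
    simpa only [iterateFrobenius_def, SubmonoidClass.coe_pow] using congrArg Subtype.val hy⟩

instance perfectRing : PerfectRing (maximalPerfectSubfield p k) p := by
  refine PerfectRing.ofSurjective _ p fun ⟨a, ha⟩ ↦ ?_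
  obtain ⟨c, hc⟩ := (mem_iff p).1 ha 1
  rw [pow_one] at hc
  -- the `p`-th root `c` of `a` is `b ^ p ^ n` for any `p ^ (n + 1)`-th root `b` of `a`
  have hc_mem : c ∈ maximalPerfectSubfield p k := (mem_iff p).2 fun n ↦ by
    obtain ⟨b, hb⟩ := (mem_iff p).1 ha (n + 1)
    refine ⟨b, frobenius_inj k p ?_⟩
    rw [frobenius_def, frobenius_def, ← pow_mul, ← pow_succ, hb, hc]
  exact ⟨⟨c, hc_mem⟩, Subtype.ext hc⟩

end maximalPerfectSubfield

/-- **Lemma 1.1(i)**: the maximal perfect subfield `k^{p^∞}` is algebraically closed in `k`: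
every element of `k` algebraic over `k^{p^∞}` already belongs to `k^{p^∞}`. -/
theorem maximalPerfectSubfield_algebraically_closed_in
    (p : ℕ) [Fact p.Prime] (k : Type*) [Field k] [CharP k p] (x : k)
    (hx : IsAlgebraic (maximalPerfectSubfield p k) x) :
    x ∈ maximalPerfectSubfield p k := by
  set F := maximalPerfectSubfield p k
  have : PerfectField F := PerfectRing.toPerfectField F p
  set E := IntermediateField.adjoin F {x}
  have : FiniteDimensional F E := IntermediateField.adjoin.finiteDimensional hx.isIntegral
  have : PerfectField E := Algebra.IsAlgebraic.perfectField F
  exact maximalPerfectSubfield.le_of_perfectField p E.toSubfield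
    (IntermediateField.mem_adjoin_simple_self F x)
end

section
/- Let l/k be a finite extension of fields of characteristic p > 0. Then l^{p^∞} is a finite extension of k^{p^∞}, and [l^{p^∞} : k^{p^∞}] ≤ [l : k]. -/
open Module Submodule Set

namespace Subfield

variable {l ι : Type*} [Field l]

theorem linearIndependent_iff_of_fintype [Fintype ι] {F : Subfield l} {v : ι → l} :
    LinearIndependent F v ↔ ∀ c : ι → l, (∀ i, c i ∈ F) → ∑ i, c i * v i = 0 → c = 0 := by
  rw [Fintype.linearIndependent_iff]
  refine ⟨fun h c hc hcv ↦ funext fun i ↦ congrArg Subtype.val (h (fun i ↦ ⟨c i, hc i⟩) hcv i),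
    fun h g hg i ↦ Subtype.ext (congrFun (h (fun i ↦ g i) (fun i ↦ (g i).2) hg) i)⟩

theorem mem_span_range_iff_of_fintype [Fintype ι] {F : Subfield l} {v : ι → l} {x : l} :
    x ∈ span F (range v) ↔ ∃ c : ι → l, (∀ i, c i ∈ F) ∧ ∑ i, c i * v i = x := by
  rw [mem_span_range_iff_exists_fun]
  exact ⟨fun ⟨g, hg⟩ ↦ ⟨fun i ↦ g i, fun i ↦ (g i).2, hg⟩,
    fun ⟨c, hc, hcx⟩ ↦ ⟨fun i ↦ ⟨c i, hc i⟩, hcx⟩⟩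

theorem linearIndependent_of_le {F E : Subfield l} (hFE : F ≤ E) {v : ι → l}
    (h : LinearIndependent E v) : LinearIndependent F v := by
  rw [linearIndependent_iff'] at h ⊢
  exact fun s g hg i hi ↦ by
    simpa using congrArg Subtype.val (h s (fun i ↦ ⟨g i, hFE (g i).2⟩) hg i hi)

variable {κ : Type*} {K : κ → Subfield l}

theorem mem_span_iInf_of_linearIndependent (hK : Directed (· ≥ ·) K) [Finite ι] {v : ι → l}
    {i₀ : κ} (hv : LinearIndependent (K i₀) v) {x : l}
    (hx : ∀ j, K j ≤ K i₀ → x ∈ span (K j) (range v)) : x ∈ span ↥(⨅ i, K i) (range v) := by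
  have := Fintype.ofFinite ι
  simp only [mem_span_range_iff_of_fintype] at hx ⊢
  obtain ⟨c, hc, hcx⟩ := hx i₀ le_rfl
  refine ⟨c, fun n ↦ mem_iInf.mpr fun i ↦ ?_, hcx⟩
  obtain ⟨j, hji, hji₀⟩ := hK i i₀
  obtain ⟨c', hc', hc'x⟩ := hx j hji₀
  have hcc' : c - c' = 0 := linearIndependent_iff_of_fintype.mp hv _
    (fun i ↦ sub_mem (hc i) (hji₀ (hc' i))) (by simp [sub_mul, hcx, hc'x])
  exact hji (sub_eq_zero.mp hcc' ▸ hc' n)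

theorem exists_linearIndependent_of_linearIndependent_iInf [Nonempty κ]
    (hK : Directed (· ≥ ·) K) [Finite ι] {v : ι → l}
    (hv : LinearIndependent ↥(⨅ i, K i) v) : ∃ i, LinearIndependent (K i) v := by
  induction ι using Finite.induction_empty_option with
  | of_equiv e ih =>
    obtain ⟨i, hi⟩ := ih (linearIndependent_equiv e |>.mpr hv)
    exact ⟨i, linearIndependent_equiv e |>.mp hi⟩
  | h_empty => exact ⟨Classical.arbitrary κ, linearIndependent_empty_type⟩
  | h_option ih =>
    rw [linearIndependent_option] at hv
    obtain ⟨i₀, hi₀⟩ := ih hv.1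
    simp_rw [linearIndependent_option]
    by_contra! h
    exact hv.2 <| mem_span_iInf_of_linearIndependent hK hi₀ fun j hj ↦
      h j (linearIndependent_of_le hj hi₀)

end Subfield

section MaximalPerfectSubfield

variable (p : ℕ) [Fact p.Prime] {k l : Type*} [Field k] [Field l] [CharP k p] [CharP l p]

theorem mem_maximalPerfectSubfield_iff {x : k} :
    x ∈ maximalPerfectSubfield p k ↔ ∀ n, ∃ y, y ^ p ^ n = x := by
  simp [maximalPerfectSubfield, Subfield.mem_iInf, iterateFrobenius_def]

theorem antitone_fieldRange_iterateFrobenius :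
    Antitone fun n ↦ (iterateFrobenius k p n).fieldRange := by
  intro m n hmn x hx
  obtain ⟨y, rfl⟩ := hx
  refine ⟨y ^ p ^ (n - m), ?_⟩
  simp only [iterateFrobenius_def, ← pow_mul, ← pow_add, Nat.sub_add_cancel hmn]

theorem map_maximalPerfectSubfield_le (f : k →+* l) :
    (maximalPerfectSubfield p k).map f ≤ maximalPerfectSubfield p l := by
  intro _ hfx
  obtain ⟨x, hx, rfl⟩ := Subfield.mem_map.mp hfx
  rw [mem_maximalPerfectSubfield_iff] at hx ⊢
  intro n
  obtain ⟨y, rfl⟩ := hx n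
  exact ⟨f y, (map_pow f y _).symm⟩

variable [Algebra k l]

theorem linearIndependent_of_linearIndependent_pow {ι : Type*} (n : ℕ) {y : ι → l}
    (h : LinearIndependent ((iterateFrobenius k p n).fieldRange.map (algebraMap k l))
      fun i ↦ y i ^ p ^ n) : LinearIndependent k y := by
  rw [linearIndependent_iff'] at h ⊢
  intro s g hg i hi
  let c : ι → (iterateFrobenius k p n).fieldRange.map (algebraMap k l) :=
    fun j ↦ ⟨algebraMap k l (g j ^ p ^ n), Subfield.mem_map.mpr ⟨_, ⟨g j, rfl⟩, rfl⟩⟩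
  have hc : ∑ j ∈ s, c j • y j ^ p ^ n = 0 := by
    have hfrob := congrArg (iterateFrobenius l p n) hg
    simp only [map_sum, map_zero, Algebra.smul_def, iterateFrobenius_def, mul_pow,
      ← map_pow] at hfrob
    exact hfrob
  have hgi : g i ^ p ^ n = 0 := by simpa [c] using congrArg Subtype.val (h s c hc i hi)
  exact eq_zero_of_pow_eq_zero hgi

theorem card_le_finrank_of_linearIndependent_over_maximalPerfectSubfield [FiniteDimensional k l]
    {ι : Type*} [Fintype ι] {x : ι → l} (hx : ∀ i, x i ∈ maximalPerfectSubfield p l)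
    (h : LinearIndependent ((maximalPerfectSubfield p k).map (algebraMap k l)) x) :
    Fintype.card ι ≤ finrank k l := by
  rw [maximalPerfectSubfield, Subfield.map_iInf] at h
  have hanti : Antitone fun n ↦ (iterateFrobenius k p n).fieldRange.map (algebraMap k l) :=
    (Subfield.gc_map_comap _).monotone_l.comp_antitone (antitone_fieldRange_iterateFrobenius p)
  obtain ⟨n, hn⟩ :=
    Subfield.exists_linearIndependent_of_linearIndependent_iInf hanti.directed_ge h
  choose y hy using fun i ↦ (mem_maximalPerfectSubfield_iff p).mp (hx i) n
  rw [← funext hy] at hn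
  exact (linearIndependent_of_linearIndependent_pow p n hn).fintype_card_le_finrank

end MaximalPerfectSubfield

/-- **Lemma 1.2(ii)**: let `l/k` be a finite extension of fields of characteristic `p > 0`.
Then `l^{p^∞}` is a finite extension of `k^{p^∞}` (viewed inside `l`), and
`[l^{p^∞} : k^{p^∞}] ≤ [l : k]`. -/
theorem maximalPerfectSubfield_finite_of_finite (p : ℕ) [Fact p.Prime]
    (k l : Type*) [Field k] [Field l] [Algebra k l] [CharP k p] [CharP l p]
    [FiniteDimensional k l] :
    ∃ hle : (maximalPerfectSubfield p k).map (algebraMap k l) ≤ maximalPerfectSubfield p l,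
      letI : Algebra ↥((maximalPerfectSubfield p k).map (algebraMap k l))
          ↥(maximalPerfectSubfield p l) := (Subfield.inclusion hle).toAlgebra
      FiniteDimensional ↥((maximalPerfectSubfield p k).map (algebraMap k l))
          ↥(maximalPerfectSubfield p l) ∧
        Module.finrank ↥((maximalPerfectSubfield p k).map (algebraMap k l))
            ↥(maximalPerfectSubfield p l) ≤ Module.finrank k l := by
  have hle := map_maximalPerfectSubfield_le p (algebraMap k l)
  refine ⟨hle, ?_⟩
  let : Algebra ↥((maximalPerfectSubfield p k).map (algebraMap k l))
      ↥(maximalPerfectSubfield p l) := (Subfield.inclusion hle).toAlgebra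
  have hrank : Module.rank ↥((maximalPerfectSubfield p k).map (algebraMap k l))
      ↥(maximalPerfectSubfield p l) ≤ finrank k l := rank_le fun s hs ↦ by
    simpa using card_le_finrank_of_linearIndependent_over_maximalPerfectSubfield p
      (x := fun i : s ↦ (i : l)) (fun i ↦ i.1.2)
      (hs.map_of_injective_injective id (maximalPerfectSubfield p l).subtype.toAddMonoidHom
        (fun _ ↦ id) (fun _ ↦ ZeroMemClass.coe_eq_zero.mp) fun _ _ ↦ rfl)
  exact ⟨Module.rank_lt_aleph0_iff.mp (hrank.trans_lt Cardinal.natCast_lt_aleph0),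
    finrank_le_of_rank_le hrank⟩
end

section
/- Let K be a field of characteristic 0, let F be a subfield of K that is algebraically closed in K, and let L/K be a finite Galois extension. Let F_L be the relative algebraic closure of F in L. Then: (a) F_L is stable under every element of Gal(L/K); (b) F_L/F is a finite Galois extension; (c) the restriction homomorphism Gal(L/K) → Gal(F_L/F) is surjective; and (d) the fixed field of Gal(L/K) acting on F_L is F. -/
/-!
Every `g ∈ Gal(L/K)` is in particular an `F`-automorphism of `L`, so it preserves the elements
algebraic over `F` and restricts to `F_L`. An element of `F_L` fixed by all of `Gal(L/K)` lies
in `K` because `L/K` is Galois, and it is algebraic over `F`, hence lies in `F`. So the image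
of `Gal(L/K)` in `Aut(F_L/F)` is a finite group of automorphisms with fixed field `F`, and
Artin's theorem makes `F_L/F` finite Galois with exactly this group as its Galois group.
-/

namespace algebraicClosure

variable (F K L : Type*) [Field F] [Field K] [Field L] [Algebra F K] [Algebra K L] [Algebra F L]
  [IsScalarTower F K L]

noncomputable def restrictHom :
    (L ≃ₐ[K] L) →* (algebraicClosure F L ≃ₐ[F] algebraicClosure F L) where
  toFun g := (g.restrictScalars F).algebraicClosure
  map_one' := rfl
  map_mul' _ _ := rfl

instance [FiniteDimensional K L] : Finite (restrictHom F K L).range :=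
  Finite.of_surjective _ (restrictHom F K L).rangeRestrict_surjective

variable {F K L} in
theorem fixed_iff_exists_algebraMap_eq [IsGalois K L]
    (halgc : ∀ x : K, IsAlgebraic F x → ∃ y : F, algebraMap F K y = x)
    {x : L} (hx : x ∈ algebraicClosure F L) :
    (∀ g : L ≃ₐ[K] L, g x = x) ↔ ∃ y : F, algebraMap F L y = x := by
  refine ⟨fun hfix => ?_, ?_⟩
  · obtain ⟨z, rfl⟩ := (InfiniteGalois.mem_range_algebraMap_iff_fixed x).2 hfix
    obtain ⟨y, rfl⟩ := halgc z <|
      (isAlgebraic_algebraMap_iff (algebraMap K L).injective).1 (mem_algebraicClosure_iff.1 hx)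
    exact ⟨y, IsScalarTower.algebraMap_apply F K L y⟩
  · rintro ⟨y, rfl⟩ g
    rw [IsScalarTower.algebraMap_apply F K L, g.commutes]

theorem isGaloisGroup_range_restrictHom [IsGalois K L]
    (halgc : ∀ x : K, IsAlgebraic F x → ∃ y : F, algebraMap F K y = x) :
    IsGaloisGroup (restrictHom F K L).range F (algebraicClosure F L) where
  faithful := inferInstance
  commutes := inferInstance
  isInvariant := ⟨fun x hx => by
    obtain ⟨y, hy⟩ := (fixed_iff_exists_algebraMap_eq halgc x.2).1
      fun g => congrArg Subtype.val (hx ⟨_, g, rfl⟩)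
    exact ⟨y, Subtype.ext hy⟩⟩

theorem restrictHom_surjective [FiniteDimensional K L] [IsGalois K L]
    (halgc : ∀ x : K, IsAlgebraic F x → ∃ y : F, algebraMap F K y = x) :
    Function.Surjective (restrictHom F K L) := by
  have := isGaloisGroup_range_restrictHom F K L halgc
  intro σ
  obtain ⟨⟨_, g, rfl⟩, rfl⟩ :=
    (IsGaloisGroup.mulEquivAlgEquiv (restrictHom F K L).range F (algebraicClosure F L)).surjective σ
  exact ⟨g, rfl⟩

end algebraicClosure

theorem relativeAlgebraicClosure_of_finite_galois_general
    (F K L : Type*) [Field F] [Field K] [Field L]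
    [Algebra F K] [Algebra K L] [Algebra F L] [IsScalarTower F K L]
    (halgc : ∀ x : K, IsAlgebraic F x → ∃ y : F, algebraMap F K y = x)
    [FiniteDimensional K L] [IsGalois K L] :
    (∀ g : L ≃ₐ[K] L,
        (algebraicClosure F L).map ((g.restrictScalars F : L ≃ₐ[F] L) : L →ₐ[F] L)
          = algebraicClosure F L) ∧
    (FiniteDimensional F (algebraicClosure F L) ∧ IsGalois F (algebraicClosure F L)) ∧
    (∀ σ : (algebraicClosure F L) ≃ₐ[F] (algebraicClosure F L),
        ∃ g : L ≃ₐ[K] L, ∀ x : algebraicClosure F L, g ↑x = ↑(σ x)) ∧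
    (∀ x : L, x ∈ algebraicClosure F L →
        ((∀ g : L ≃ₐ[K] L, g x = x) ↔ ∃ y : F, algebraMap F L y = x)) := by
  let H := (algebraicClosure.restrictHom F K L).range
  have := algebraicClosure.isGaloisGroup_range_restrictHom F K L halgc
  refine ⟨fun g => algebraicClosure.map_eq_of_algEquiv (g.restrictScalars F),
    ⟨IsGaloisGroup.finiteDimensional H F _, IsGaloisGroup.isGalois H F _⟩, fun σ => ?_,
    fun x hx => algebraicClosure.fixed_iff_exists_algebraMap_eq halgc hx⟩
  obtain ⟨g, rfl⟩ := algebraicClosure.restrictHom_surjective F K L halgc σ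
  exact ⟨g, fun x => rfl⟩

/-- **Lemma 1.4(ii)** (field-theoretic content): let `K` be a field of characteristic `0`,
`F ⊆ K` a subfield algebraically closed in `K`, and `L/K` a finite Galois extension.
Let `F_L = algebraicClosure F L` be the relative algebraic closure of `F` in `L`.  Then:
(a) `F_L` is stable under every element of `Gal(L/K)`;
(b) `F_L/F` is a finite Galois extension;
(c) the restriction map `Gal(L/K) → Gal(F_L/F)` is surjective, i.e. every `F`-algebra
    automorphism of `F_L` is the restriction of some `g ∈ Gal(L/K)`; and
(d) the fixed field of `Gal(L/K)` acting on `F_L` is `F`. -/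
theorem relativeAlgebraicClosure_of_finite_galois
    (F K L : Type*) [Field F] [Field K] [Field L] [CharZero K]
    [Algebra F K] [Algebra K L] [Algebra F L] [IsScalarTower F K L]
    (halgc : ∀ x : K, IsAlgebraic F x → ∃ y : F, algebraMap F K y = x)
    [FiniteDimensional K L] [IsGalois K L] :
    (∀ g : L ≃ₐ[K] L,
        (algebraicClosure F L).map ((g.restrictScalars F : L ≃ₐ[F] L) : L →ₐ[F] L)
          = algebraicClosure F L) ∧
    (FiniteDimensional F (algebraicClosure F L) ∧ IsGalois F (algebraicClosure F L)) ∧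
    (∀ σ : (algebraicClosure F L) ≃ₐ[F] (algebraicClosure F L),
        ∃ g : L ≃ₐ[K] L, ∀ x : algebraicClosure F L, g ↑x = ↑(σ x)) ∧
    (∀ x : L, x ∈ algebraicClosure F L →
        ((∀ g : L ≃ₐ[K] L, g x = x) ↔ ∃ y : F, algebraMap F L y = x)) :=
  relativeAlgebraicClosure_of_finite_galois_general F K L halgc
end

section
/- Let K be a field of characteristic 0, let F be a subfield of K that is algebraically closed in K, and let L/K be a finite extension. Let F_L be the relative algebraic closure of F in L. Then F_L/F is a finite extension and [F_L : F] ≤ [L : K]. -/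
/-!
For `x` in the relative algebraic closure, the coefficients of `minpoly K x` are algebraic over
`F`, hence lie in `F`, so `minpoly K x` is the image of `minpoly F x` and
`[F⟮x⟯ : F] = [K⟮x⟯ : K] ≤ [L : K]`.
In characteristic zero, an algebraic extension whose elements have bounded degree is finite: by the
primitive element theorem, an element of maximal degree generates the whole extension.
-/

open Polynomial IntermediateField Module

section AlgebraicallyClosedIn

variable {F K L : Type*} [Field F] [Field K] [Field L]
  [Algebra F K] [Algebra K L] [Algebra F L] [IsScalarTower F K L]

/-- The roots of `minpoly K x` are roots of `minpoly F x`, hence integral over `F`, and so are the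
coefficients, which are polynomials in them. -/
theorem minpoly_mem_lifts_of_algebraicallyClosedIn
    (halgc : ∀ x : K, IsAlgebraic F x → ∃ y : F, algebraMap F K y = x)
    {x : L} (hx : IsIntegral F x) :
    minpoly K x ∈ lifts (algebraMap F K) := by
  have hmem := integralClosure.mem_lifts_of_monic_of_dvd_map K (minpoly.monic hx)
    (minpoly.monic hx.tower_top) (minpoly.dvd_map_of_isScalarTower F K x)
  rw [lifts_iff_coeff_lifts] at hmem ⊢
  intro n
  obtain ⟨⟨c, hc⟩, hc_coeff⟩ := hmem n
  obtain ⟨y, hy⟩ := halgc c hc.isAlgebraic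
  exact ⟨y, hy.trans hc_coeff⟩

theorem minpoly_eq_map_of_algebraicallyClosedIn
    (halgc : ∀ x : K, IsAlgebraic F x → ∃ y : F, algebraMap F K y = x)
    {x : L} (hx : IsIntegral F x) :
    minpoly K x = (minpoly F x).map (algebraMap F K) := by
  obtain ⟨g, hg_map, -, hg_monic⟩ := lifts_and_degree_eq_and_monic
    (minpoly_mem_lifts_of_algebraicallyClosedIn halgc hx) (minpoly.monic hx.tower_top)
  have hg_irred : Irreducible g := hg_monic.irreducible_of_irreducible_map _ _
    (hg_map ▸ minpoly.irreducible hx.tower_top)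
  have hg_root : aeval x g = 0 := by
    rw [← aeval_map_algebraMap K, hg_map, minpoly.aeval]
  rw [← hg_map, minpoly.eq_of_irreducible_of_monic hg_irred hg_root hg_monic]

end AlgebraicallyClosedIn

section BoundedDegree

variable (F : Type*) {E : Type*} [Field F] [Field E] [Algebra F E]
  [Infinite F] [Algebra.IsSeparable F E]

theorem adjoin_simple_eq_top_of_forall_finrank_le {x₀ : E}
    (hmax : ∀ y : E, finrank F F⟮y⟯ ≤ finrank F F⟮x₀⟯) : F⟮x₀⟯ = ⊤ := by
  refine eq_top_iff.2 fun y _ => ?_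
  obtain ⟨γ, hγ⟩ := Field.primitive_element_inf_aux F x₀ y
  have : FiniteDimensional F F⟮γ⟯ := adjoin.finiteDimensional (Algebra.IsSeparable.isIntegral F γ)
  have hle : F⟮x₀⟯ ≤ F⟮γ⟯ := hγ ▸ adjoin.mono F _ _ (by simp)
  have heq : F⟮x₀⟯ = F⟮γ⟯ := eq_of_le_of_finrank_le hle (hmax γ)
  exact heq ▸ hγ ▸ subset_adjoin F _ (by simp)

theorem finiteDimensional_and_finrank_le_of_forall_finrank_adjoin_simple_le {n : ℕ}
    (h : ∀ x : E, finrank F F⟮x⟯ ≤ n) : FiniteDimensional F E ∧ finrank F E ≤ n := by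
  have hbdd : BddAbove (Set.range fun x : E => finrank F F⟮x⟯) := ⟨n, Set.forall_mem_range.2 h⟩
  obtain ⟨x₀, hx₀⟩ := Nat.sSup_mem (Set.range_nonempty _) hbdd
  have htop : F⟮x₀⟯ = ⊤ :=
    adjoin_simple_eq_top_of_forall_finrank_le F fun y =>
      (le_csSup hbdd ⟨y, rfl⟩).trans_eq hx₀.symm
  refine ⟨Field.FiniteDimensional.of_exists_primitive_element F E ⟨x₀, htop⟩, ?_⟩
  rw [← finrank_top', ← htop]
  exact h x₀

end BoundedDegree

/-- **Lemma 1.4(iii)** (field-theoretic content): let `K` be a field of characteristic `0`,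
`F ⊆ K` a subfield algebraically closed in `K`, and `L/K` a finite extension.  Let
`F_L = algebraicClosure F L` be the relative algebraic closure of `F` in `L`.  Then `F_L/F`
is a finite extension and `[F_L : F] ≤ [L : K]`. -/
theorem relativeAlgebraicClosure_finite_of_finite
    (F K L : Type*) [Field F] [Field K] [Field L] [CharZero K]
    [Algebra F K] [Algebra K L] [Algebra F L] [IsScalarTower F K L]
    (halgc : ∀ x : K, IsAlgebraic F x → ∃ y : F, algebraMap F K y = x)
    [FiniteDimensional K L] :
    FiniteDimensional F (algebraicClosure F L) ∧
      Module.finrank F (algebraicClosure F L) ≤ Module.finrank K L := by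
  have : CharZero F := (algebraMap F K).charZero
  refine finiteDimensional_and_finrank_le_of_forall_finrank_adjoin_simple_le F fun x => ?_
  have hx : IsIntegral F (x : L) := mem_algebraicClosure_iff'.1 x.2
  calc finrank F F⟮x⟯ = (minpoly F (x : L)).natDegree := by
        rw [adjoin.finrank (Algebra.IsIntegral.isIntegral x),
          ← minpoly.algebraMap_eq (algebraMap (algebraicClosure F L) L).injective]; rfl
    _ = (minpoly K (x : L)).natDegree := by
        rw [minpoly_eq_map_of_algebraicallyClosedIn halgc hx, natDegree_map]
    _ ≤ finrank K L := minpoly.natDegree_le _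
end

section
/- Let K be a field of characteristic 0, let F be a subfield of K that is algebraically closed in K, fix an algebraic closure K̄ of K, and let K' ⊆ K̄ be a finite extension of F. Let KK' denote the compositum of K and K' inside K̄. Then the relative algebraic closure of F in KK' equals K'. -/
/-!
If `F` is algebraically closed in `K`, the minimal polynomial over `F` of an element algebraic
over `F` stays irreducible over `K`: the coefficients of its monic factors over `K` are integral
over `F`, hence lie in `F`. Through a primitive element this gives `[KM : K] = [M : F]` for every
finite separable `M / F`. If `x ∈ KK'` is algebraic over `F`, then `K'` and `K'(x)` have the same
compositum with `K`, so `[K'(x) : F] = [K' : F]` and `x ∈ K'`.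
-/

open Polynomial IntermediateField Module

section Tower

variable {F K Ω : Type*} [Field F] [Field K] [Field Ω] [Algebra F K] [Algebra K Ω] [Algebra F Ω]
  [IsScalarTower F K Ω]

theorem minpoly.map_eq_of_algebraicClosure_eq_bot (h : algebraicClosure F K = ⊥) {γ : Ω}
    (hγ : IsIntegral F γ) : (minpoly F γ).map (algebraMap F K) = minpoly K γ := by
  have hdvd : minpoly K γ ∣ (minpoly F γ).map (algebraMap F K) :=
    minpoly.dvd_map_of_isScalarTower F K γ
  obtain ⟨q, hq⟩ : ∃ q : F[X], q.map (algebraMap F K) = minpoly K γ := by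
    refine (mem_lifts _).mp ?_
    have hlifts := integralClosure.mem_lifts_of_monic_of_dvd_map K (minpoly.monic hγ)
      (minpoly.monic hγ.tower_top) hdvd
    rw [lifts_iff_coeff_lifts] at hlifts ⊢
    intro n
    obtain ⟨⟨y, hy⟩, rfl⟩ := hlifts n
    exact mem_bot.mp (h ▸ mem_algebraicClosure_iff'.mpr hy)
  have hq_aeval : Polynomial.aeval γ q = 0 := by
    rw [← aeval_map_algebraMap K, hq, minpoly.aeval]
  refine eq_of_monic_of_associated ((minpoly.monic hγ).map _) (minpoly.monic hγ.tower_top)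
    (associated_of_dvd_dvd ?_ hdvd)
  rw [← hq]
  exact Polynomial.map_dvd _ (minpoly.dvd F γ hq_aeval)

namespace IntermediateField

theorem finrank_adjoin_simple_eq_of_algebraicClosure_eq_bot (h : algebraicClosure F K = ⊥)
    {γ : Ω} (hγ : IsIntegral F γ) : finrank K K⟮γ⟯ = finrank F F⟮γ⟯ := by
  rw [adjoin.finrank hγ.tower_top, adjoin.finrank hγ,
    ← minpoly.map_eq_of_algebraicClosure_eq_bot h hγ, natDegree_map]

theorem adjoin_adjoin_of_tower (S : Set Ω) : adjoin K (adjoin F S : Set Ω) = adjoin K S :=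
  le_antisymm
    (adjoin_le_iff.mpr fun _ hx ↦
      (adjoin_le_iff (T := (adjoin K S).restrictScalars F)).mpr (subset_adjoin K S) hx)
    (adjoin.mono _ _ _ (subset_adjoin F S))

theorem finrank_adjoin_eq_of_algebraicClosure_eq_bot (h : algebraicClosure F K = ⊥)
    (M : IntermediateField F Ω) [FiniteDimensional F M] [Algebra.IsSeparable F M] :
    finrank K (adjoin K (M : Set Ω)) = finrank F M := by
  obtain ⟨β, rfl⟩ : ∃ β : Ω, F⟮β⟯ = M := by
    obtain ⟨β, hβ⟩ := Field.exists_primitive_element F M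
    exact ⟨β, by simpa only [lift_adjoin_simple, lift_top] using congr_arg lift hβ⟩
  rw [adjoin_adjoin_of_tower, finrank_adjoin_simple_eq_of_algebraicClosure_eq_bot h
    ((AdjoinSimple.isIntegral_gen F β).mp (IsIntegral.of_finite F _))]

end IntermediateField

end Tower

theorem IntermediateField.eq_of_le_of_le_sup_of_algebraicClosure_eq_bot
    {F Ω : Type*} [Field F] [Field Ω] [Algebra F Ω] {K M N : IntermediateField F Ω}
    (h : algebraicClosure F K = ⊥) [FiniteDimensional F N] [Algebra.IsSeparable F N]
    (hMN : M ≤ N) (hN : N ≤ K ⊔ M) : M = N := by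
  have : FiniteDimensional F M :=
    .of_injective (inclusion hMN).toLinearMap (inclusion hMN).injective
  have : Algebra.IsSeparable F M := .of_algHom F N (inclusion hMN)
  have : FiniteDimensional K (adjoin K (M : Set Ω)) := Module.finite_of_finrank_pos <| by
    rw [finrank_adjoin_eq_of_algebraicClosure_eq_bot h]
    exact Module.finrank_pos
  have hle : adjoin K (N : Set Ω) ≤ adjoin K (M : Set Ω) := by
    have hsup : K ⊔ M = (adjoin K (M : Set Ω)).restrictScalars F := by
      rw [restrictScalars_adjoin_eq_sup, adjoin_self]
    exact adjoin_le_iff.mpr (hsup ▸ hN : N ≤ (adjoin K (M : Set Ω)).restrictScalars F)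
  refine eq_of_le_of_finrank_le hMN ?_
  calc finrank F N = finrank K (adjoin K (N : Set Ω)) :=
        (finrank_adjoin_eq_of_algebraicClosure_eq_bot h N).symm
    _ ≤ finrank K (adjoin K (M : Set Ω)) := finrank_le_of_le_right hle
    _ = finrank F M := finrank_adjoin_eq_of_algebraicClosure_eq_bot h M

theorem relativeAlgebraicClosure_in_compositum_general
    (Ω : Type*) [Field Ω] [CharZero Ω]
    (K F K' : Subfield Ω) (hFK : F ≤ K)
    (halgc : ∀ x ∈ K, IsAlgebraic (↥F) x → x ∈ F)
    (hFK' : F ≤ K')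
    (hfin : letI : Algebra ↥F ↥K' := (Subfield.inclusion hFK').toAlgebra;
      Module.Finite ↥F ↥K') :
    {x : Ω | x ∈ K ⊔ K' ∧ IsAlgebraic (↥F) x} = (K' : Set Ω) := by
  set L : IntermediateField F Ω := K.toIntermediateField fun x ↦ hFK x.2
  set L' : IntermediateField F Ω := K'.toIntermediateField fun x ↦ hFK' x.2
  have : FiniteDimensional F L' := hfin
  have hL : algebraicClosure F L = ⊥ := eq_bot_iff.mpr fun y hy ↦
    mem_bot.mpr ⟨⟨y, halgc y y.2 (mem_algebraicClosure_iff.mp hy).algebraMap⟩, rfl⟩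
  have hsup : (L ⊔ L').toSubfield = K ⊔ K' := sup_toSubfield L L'
  ext x
  refine ⟨fun ⟨hxKK', hx⟩ ↦ ?_, fun hx ↦ ⟨le_sup_right (α := Subfield Ω) hx,
    (IsIntegral.of_finite F (⟨x, hx⟩ : L')).isAlgebraic.algebraMap⟩⟩
  have : FiniteDimensional F F⟮x⟯ := adjoin.finiteDimensional hx.isIntegral
  have hN : L' ⊔ F⟮x⟯ ≤ L ⊔ L' :=
    sup_le le_sup_right (adjoin_simple_le_iff.mpr (hsup ▸ hxKK' : x ∈ (L ⊔ L').toSubfield))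
  change x ∈ L'
  rw [eq_of_le_of_le_sup_of_algebraicClosure_eq_bot hL le_sup_left hN]
  exact le_sup_right (α := IntermediateField F Ω) (mem_adjoin_simple_self F x)

/-- **Lemma 1.4(iv)** (field-theoretic content): let `K` be a field of characteristic `0`,
`F ⊆ K` a subfield algebraically closed in `K`, `K̄` (here `Ω`) an algebraic closure of `K`,
and `K' ⊆ K̄` a finite extension of `F`.  Then the relative algebraic closure of `F` in the
compositum `KK'` equals `K'`; that is,
`{x ∈ K ⊔ K' | x is algebraic over F} = K'`. -/
theorem relativeAlgebraicClosure_in_compositum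
    (Ω : Type*) [Field Ω] [CharZero Ω] [IsAlgClosed Ω]
    (K F K' : Subfield Ω) (hFK : F ≤ K)
    (halgc : ∀ x ∈ K, IsAlgebraic (↥F) x → x ∈ F)
    (halg : Algebra.IsAlgebraic K Ω)
    (hFK' : F ≤ K')
    (hfin : letI : Algebra ↥F ↥K' := (Subfield.inclusion hFK').toAlgebra;
      Module.Finite ↥F ↥K') :
    {x : Ω | x ∈ K ⊔ K' ∧ IsAlgebraic (↥F) x} = (K' : Set Ω) :=
  relativeAlgebraicClosure_in_compositum_general Ω K F K' hFK halgc hFK' hfin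
end

section
/- Let p be a prime, E a field of characteristic 0, r ∈ ℕ with r ≥ 1, n ∈ ℕ with n ≥ 1, I an index set, and (n_i)_{i∈I} ∈ ℕ^I. Let U^{(n)} := 1 + p^n ℤ_p, the subgroup of ℤ_p^× of units congruent to 1 modulo p^n, let A := Π_{i∈I} p^{n_i}ℤ_p (a product of additive subgroups of ℤ_p), and form the semidirect product G := U^{(n)} ⋉ A, where U^{(n)} acts on A by componentwise scalar multiplication. Let ρ : G → GL_r(E) be a group homomorphism whose kernel contains an open subgroup of U^{(n)} × {0}, i.e. there exists m ≥ n such that ρ(u, 0) = 1 for all u ∈ 1 + p^m ℤ_p. Then the image of ρ is finite. -/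
/-- The subgroup `1 + pⁿℤ_p` of `ℤ_pˣ`. -/
def unitsOnePlusPPow (p n : ℕ) [Fact p.Prime] : Subgroup ℤ_[p]ˣ where
  carrier := {u | ∃ a : ℤ_[p], (u : ℤ_[p]) = 1 + (p : ℤ_[p]) ^ n * a}
  one_mem' := ⟨0, by simp⟩
  mul_mem' := by
    rintro x y ⟨a, ha⟩ ⟨b, hb⟩
    exact ⟨a + b + (p : ℤ_[p]) ^ n * a * b, by rw [Units.val_mul, ha, hb]; ring⟩
  inv_mem' := by
    rintro x ⟨a, ha⟩
    refine ⟨-a * ↑x⁻¹, ?_⟩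
    have hx : (↑x : ℤ_[p]) * ↑x⁻¹ = 1 := x.mul_inv
    linear_combination hx - (↑x⁻¹ : ℤ_[p]) * ha

/-- The product `Π_{i ∈ I} p^{n_i}ℤ_p` of additive subgroups of `ℤ_p`. -/
abbrev PiPPowZp (p : ℕ) [Fact p.Prime] (I : Type*) (ni : I → ℕ) : Type _ :=
  Π i : I, ↥(Ideal.span {(p : ℤ_[p]) ^ ni i})

/-- Componentwise multiplication by a unit of `ℤ_p`, as an additive automorphism
of `Π_{i ∈ I} p^{n_i}ℤ_p`. -/
noncomputable def unitSMulAddAut (p : ℕ) [Fact p.Prime] (I : Type*) (ni : I → ℕ)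
    (u : ℤ_[p]ˣ) : PiPPowZp p I ni ≃+ PiPPowZp p I ni where
  toFun a := fun i => ⟨(u : ℤ_[p]) * ↑(a i), Ideal.mul_mem_left _ _ (a i).2⟩
  invFun a := fun i => ⟨((u⁻¹ : ℤ_[p]ˣ) : ℤ_[p]) * ↑(a i), Ideal.mul_mem_left _ _ (a i).2⟩
  left_inv a := by
    funext i
    apply Subtype.ext
    show ((u⁻¹ : ℤ_[p]ˣ) : ℤ_[p]) * ((u : ℤ_[p]) * ↑(a i)) = ↑(a i)
    rw [← mul_assoc, Units.inv_mul, one_mul]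
  right_inv a := by
    funext i
    apply Subtype.ext
    show (u : ℤ_[p]) * (((u⁻¹ : ℤ_[p]ˣ) : ℤ_[p]) * ↑(a i)) = ↑(a i)
    rw [← mul_assoc, Units.mul_inv, one_mul]
  map_add' a b := by
    funext i
    apply Subtype.ext
    show (u : ℤ_[p]) * (↑(a i) + ↑(b i)) = (u : ℤ_[p]) * ↑(a i) + (u : ℤ_[p]) * ↑(b i)
    ring

/-- The action of `1 + pⁿℤ_p ⊆ ℤ_pˣ` on `Π_{i ∈ I} p^{n_i}ℤ_p` by componentwise scalar
multiplication, packaged for the semidirect product. -/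
noncomputable def padicScalarAction (p n : ℕ) [Fact p.Prime] (I : Type*) (ni : I → ℕ) :
    unitsOnePlusPPow p n →* MulAut (Multiplicative (PiPPowZp p I ni)) where
  toFun u := AddEquiv.toMultiplicative (unitSMulAddAut p I ni (u : ℤ_[p]ˣ))
  map_one' := by
    refine DFunLike.ext _ _ fun a => funext fun i => Subtype.ext ?_
    show ((((1 : unitsOnePlusPPow p n) : ℤ_[p]ˣ)) : ℤ_[p]) * ↑(a i) = ↑(a i)
    simp
  map_mul' u v := by
    refine DFunLike.ext _ _ fun a => funext fun i => Subtype.ext ?_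
    show ((((u * v : unitsOnePlusPPow p n) : ℤ_[p]ˣ)) : ℤ_[p]) * ↑(a i)
        = ((u : ℤ_[p]ˣ) : ℤ_[p]) * (((v : ℤ_[p]ˣ) : ℤ_[p]) * ↑(a i))
    simp [mul_assoc]

/-!
Take `u = 1 + p^(m+1)`, which lies in `1 + pᵐℤ_p`, so `ρ(u, 0) = 1`. Conjugation by `(u, 0)` is
multiplication by `u` on `A`, i.e. `a ↦ a + p^(m+1) a`; hence `ρ(0, a)^(p^(m+1)) = 1` for every `a`.
These matrices commute, so they lie in a commutative finite-dimensional `E`-algebra. That is an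
artinian ring, in which `X^N - 1` has only finitely many roots when `N` is invertible: modulo the
nilradical it is a finite product of fields, and two roots of a separable polynomial that differ by
a nilpotent coincide (uniqueness in Newton's method). On the other side, `ρ(u, 0)` only depends on
`u` modulo `pᵐ`. Every element of `G` is a product `(0, a)(u, 0)`.
-/

open Polynomial in
theorem eq_of_pow_eq_one_of_isNilpotent_sub {R : Type*} [CommRing R] {N : ℕ} (hN0 : N ≠ 0)
    (hN : IsUnit (N : R)) {a b : R} (ha : a ^ N = 1) (hb : b ^ N = 1)
    (hab : IsNilpotent (a - b)) : a = b := by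
  have hb_root : aeval b (X ^ N - 1 : R[X]) = 0 := by simp [hb]
  have hb_unit : IsUnit (aeval b (derivative (X ^ N - 1 : R[X]))) := by
    simpa [derivative_X_pow] using ⟨hN, (IsUnit.of_pow_eq_one hb hN0).pow (N - 1)⟩
  obtain ⟨r, -, hr⟩ := existsUnique_nilpotent_sub_and_aeval_eq_zero
    (by rw [hb_root]; exact IsNilpotent.zero) hb_unit
  exact (hr a ⟨by rwa [← neg_sub, isNilpotent_neg_iff], by simp [ha]⟩).trans
    (hr b ⟨by simp, hb_root⟩).symm

open Polynomial in
theorem IsArtinianRing.finite_setOf_pow_eq_one {R : Type*} [CommRing R] [IsArtinianRing R]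
    {N : ℕ} (hN0 : N ≠ 0) (hN : IsUnit (N : R)) : {x : R | x ^ N = 1}.Finite := by
  let π := RingHom.pi fun I : MaximalSpectrum R => Ideal.Quotient.mk I.asIdeal
  have hker : RingHom.ker π = nilradical R := by
    rw [Ideal.ker_Pi_Quotient_mk, IsArtinianRing.nilradical_eq_iInf]
  have hfin : (π '' {x : R | x ^ N = 1}).Finite := by
    refine (Set.Finite.pi (t := fun I : MaximalSpectrum R => {y : R ⧸ I.asIdeal | y ^ N = 1})
      fun I => ?_).subset ?_
    · let := Ideal.Quotient.field I.asIdeal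
      refine (finite_setOfPred_isRoot
        (X_pow_sub_C_ne_zero (Nat.pos_of_ne_zero hN0) (1 : R ⧸ I.asIdeal))).subset ?_
      intro y hy
      simp [Set.mem_ofPred_eq.mp hy]
    · rintro _ ⟨x, hx, rfl⟩ I -
      rw [Set.mem_ofPred_eq, ← Pi.pow_apply, ← map_pow, hx, map_one, Pi.one_apply]
  refine hfin.of_finite_image fun a ha b hb hab =>
    eq_of_pow_eq_one_of_isNilpotent_sub hN0 hN ha hb ?_
  rw [← mem_nilradical, ← hker, RingHom.mem_ker, map_sub, hab, sub_self]

open scoped IsMulCommutative in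
theorem finite_of_commute_of_pow_eq_one {E A : Type*} [Field E] [Ring A] [Algebra E A]
    [FiniteDimensional E A] {N : ℕ} (hN : (N : E) ≠ 0) {T : Set A}
    (hcomm : ∀ x ∈ T, ∀ y ∈ T, x * y = y * x) (hpow : ∀ x ∈ T, x ^ N = 1) : T.Finite := by
  let S := Algebra.adjoin E T
  have : IsMulCommutative S := Algebra.isMulCommutative_adjoin E hcomm
  have : IsArtinianRing S := IsArtinianRing.of_finite E S
  have hN0 : N ≠ 0 := by rintro rfl; simp at hN
  have hNS : IsUnit (N : S) := by simpa using (isUnit_iff_ne_zero.mpr hN).map (algebraMap E S)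
  refine ((IsArtinianRing.finite_setOf_pow_eq_one hN0 hNS).image Subtype.val).subset ?_
  intro x hx
  exact ⟨⟨x, Algebra.subset_adjoin hx⟩, Subtype.ext (hpow x hx), rfl⟩

theorem MonoidHom.finite_range_of_pow_eq_one {E A M : Type*} [Field E] [Ring A] [Algebra E A]
    [FiniteDimensional E A] [CommMonoid M] {N : ℕ} (hN : (N : E) ≠ 0) (f : M →* Aˣ)
    (hf : ∀ x, f x ^ N = 1) : (Set.range f).Finite := by
  refine Set.Finite.of_finite_image ?_ Units.val_injective.injOn
  refine finite_of_commute_of_pow_eq_one hN ?_ ?_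
  · rintro _ ⟨_, ⟨x, rfl⟩, rfl⟩ _ ⟨_, ⟨y, rfl⟩, rfl⟩
    rw [← Units.val_mul, ← map_mul, mul_comm, map_mul, Units.val_mul]
  · rintro _ ⟨_, ⟨x, rfl⟩, rfl⟩
    rw [← Units.val_pow_eq_pow_val, hf, Units.val_one]

theorem MonoidHom.finite_range_of_le_ker {G H : Type*} [Group G] [Group H] (f : G →* H)
    (K : Subgroup G) [K.FiniteIndex] (hK : K ≤ f.ker) : (Set.range f).Finite := by
  have := Subgroup.finiteIndex_of_le hK
  exact Set.finite_coe_iff.mp (Finite.of_equiv _ (QuotientGroup.quotientKerEquivRange f).toEquiv)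

namespace SemidirectProduct

variable {N G H : Type*} [Group N] [Group G] [Group H] {φ : G →* MulAut N}

theorem map_inl_aut_of_map_inr_eq_one (f : N ⋊[φ] G →* H) {g : G} (hg : f (inr g) = 1)
    (a : N) : f (inl (φ g a)) = f (inl a) := by
  simp [inl_aut, hg]

open Pointwise in
theorem finite_range_of_finite_range_comp (f : N ⋊[φ] G →* H)
    (hl : (Set.range (f.comp inl)).Finite) (hr : (Set.range (f.comp inr)).Finite) :
    (Set.range f).Finite := by
  refine (hl.mul hr).subset ?_
  rintro _ ⟨x, rfl⟩
  exact ⟨_, ⟨x.left, rfl⟩, _, ⟨x.right, rfl⟩, by simp [← map_mul, inl_left_mul_inr_right]⟩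

end SemidirectProduct

theorem unitsOnePlusPPow_eq_ker_unitsMap_toZModPow (p m : ℕ) [Fact p.Prime] :
    unitsOnePlusPPow p m = (Units.map (PadicInt.toZModPow (p := p) m).toMonoidHom).ker := by
  ext u
  rw [RingHom.toMonoidHom_eq_coe, MonoidHom.mem_ker, Units.ext_iff, Units.coe_map, Units.val_one, MonoidHom.coe_coe,
    ← sub_eq_zero, ← map_one (PadicInt.toZModPow m), ← map_sub, ← RingHom.mem_ker,
    PadicInt.ker_toZModPow, Ideal.mem_span_singleton]
  constructor
  · rintro ⟨a, ha⟩
    exact ⟨a, by rw [ha]; ring⟩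
  · rintro ⟨a, ha⟩
    exact ⟨a, by linear_combination ha⟩

instance (p m : ℕ) [Fact p.Prime] : (unitsOnePlusPPow p m).FiniteIndex := by
  rw [unitsOnePlusPPow_eq_ker_unitsMap_toZModPow]
  infer_instance

theorem PadicInt.isUnit_one_add_p_mul {p : ℕ} [Fact p.Prime] (x : ℤ_[p]) :
    IsUnit (1 + p * x) := by
  simpa using IsLocalRing.isUnit_one_sub_self_of_mem_nonunits (-(p * x))
    (PadicInt.mem_nonunits.mpr
      ((PadicInt.norm_lt_one_iff_dvd _).mpr (dvd_mul_right _ _).neg_right))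

theorem exists_val_eq_one_add_pow {p : ℕ} [Fact p.Prime] {n m : ℕ} (hnm : n ≤ m) :
    ∃ u : unitsOnePlusPPow p n, (u : ℤ_[p]ˣ) ∈ unitsOnePlusPPow p m ∧
      ((u : ℤ_[p]ˣ) : ℤ_[p]) = 1 + ((p ^ (m + 1) : ℕ) : ℤ_[p]) := by
  obtain ⟨u, hu⟩ := PadicInt.isUnit_one_add_p_mul (p := p) (p ^ m)
  have hval : (u : ℤ_[p]) = 1 + ((p ^ (m + 1) : ℕ) : ℤ_[p]) := by rw [hu]; push_cast; ring
  refine ⟨⟨u, p ^ (m + 1 - n), ?_⟩, ⟨p, ?_⟩, hval⟩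
  · rw [hval, Nat.cast_pow, ← pow_add, Nat.add_sub_cancel' (by omega)]
  · rw [hval]; push_cast; ring

theorem padicScalarAction_apply_of_val_eq_one_add {p n : ℕ} [Fact p.Prime] {I : Type*}
    {ni : I → ℕ}
    {u : unitsOnePlusPPow p n} {k : ℕ} (hu : ((u : ℤ_[p]ˣ) : ℤ_[p]) = 1 + k)
    (a : Multiplicative (PiPPowZp p I ni)) :
    padicScalarAction p n I ni u a = a * a ^ k := by
  refine funext fun i => Subtype.ext ?_
  change ((u : ℤ_[p]ˣ) : ℤ_[p]) * (Multiplicative.toAdd a i : ℤ_[p])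
    = ((Multiplicative.toAdd a + k • Multiplicative.toAdd a) i : ℤ_[p])
  simp [hu, add_mul, nsmul_eq_mul]

theorem map_inl_pow_eq_one {p n : ℕ} [Fact p.Prime] {I : Type*} {ni : I → ℕ} {H : Type*}
    [Group H]
    (ρ : SemidirectProduct (Multiplicative (PiPPowZp p I ni)) (unitsOnePlusPPow p n)
        (padicScalarAction p n I ni) →* H) {m : ℕ} (hnm : n ≤ m)
    (hker : ∀ u : unitsOnePlusPPow p n,
        (u : ℤ_[p]ˣ) ∈ unitsOnePlusPPow p m → ρ (SemidirectProduct.inr u) = 1)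
    (a : Multiplicative (PiPPowZp p I ni)) : ρ (SemidirectProduct.inl a) ^ p ^ (m + 1) = 1 := by
  obtain ⟨u, hum, hu⟩ := exists_val_eq_one_add_pow (p := p) hnm
  have := SemidirectProduct.map_inl_aut_of_map_inr_eq_one ρ (hker u hum) a
  rwa [padicScalarAction_apply_of_val_eq_one_add hu, map_mul, map_pow, map_mul, map_pow,
    mul_eq_left] at this

theorem finite_image_of_kernel_contains_open_subgroup_general
    (p : ℕ) [Fact p.Prime] (E : Type*) [Field E] [CharZero E]
    (r : ℕ) (n : ℕ) (I : Type*) (ni : I → ℕ)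
    (ρ : SemidirectProduct (Multiplicative (PiPPowZp p I ni)) (unitsOnePlusPPow p n)
        (padicScalarAction p n I ni) →* Matrix.GeneralLinearGroup (Fin r) E)
    (hker : ∃ m : ℕ, n ≤ m ∧ ∀ u : unitsOnePlusPPow p n,
        (u : ℤ_[p]ˣ) ∈ unitsOnePlusPPow p m → ρ (SemidirectProduct.inr u) = 1) :
    (Set.range ρ).Finite := by
  obtain ⟨m, hnm, hker⟩ := hker
  have hN : ((p ^ (m + 1) : ℕ) : E) ≠ 0 := by
    exact_mod_cast pow_ne_zero _ (Fact.out : p.Prime).ne_zero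
  refine SemidirectProduct.finite_range_of_finite_range_comp ρ ?_ ?_
  · exact (ρ.comp SemidirectProduct.inl).finite_range_of_pow_eq_one hN
      (map_inl_pow_eq_one ρ hnm hker)
  · exact (ρ.comp SemidirectProduct.inr).finite_range_of_le_ker
      ((unitsOnePlusPPow p m).subgroupOf (unitsOnePlusPPow p n)) fun u hu => hker u hu

/-- **Lemma 2.2**: let `p` be a prime, `E` a field of characteristic `0`, `r ≥ 1`, `n ≥ 1`,
`I` an index set and `(n_i)_{i∈I} ∈ ℕ^I`.  Let `G = U^{(n)} ⋉ Π_{i∈I} p^{n_i}ℤ_p`, where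
`U^{(n)} = 1 + pⁿℤ_p` acts by componentwise scalar multiplication.  If
`ρ : G → GL_r(E)` is a group homomorphism whose kernel contains an open subgroup of
`U^{(n)} × {0}` (i.e. there is `m ≥ n` with `ρ(u,0) = 1` for all `u ∈ 1 + pᵐℤ_p`),
then the image of `ρ` is finite. -/
theorem finite_image_of_kernel_contains_open_subgroup
    (p : ℕ) [Fact p.Prime] (E : Type*) [Field E] [CharZero E]
    (r : ℕ) (hr : 1 ≤ r) (n : ℕ) (hn : 1 ≤ n) (I : Type*) (ni : I → ℕ)
    (ρ : SemidirectProduct (Multiplicative (PiPPowZp p I ni)) (unitsOnePlusPPow p n)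
        (padicScalarAction p n I ni) →* Matrix.GeneralLinearGroup (Fin r) E)
    (hker : ∃ m : ℕ, n ≤ m ∧ ∀ u : unitsOnePlusPPow p n,
        (u : ℤ_[p]ˣ) ∈ unitsOnePlusPPow p m → ρ (SemidirectProduct.inr u) = 1) :
    (Set.range ρ).Finite :=
  finite_image_of_kernel_contains_open_subgroup_general p E r n I ni ρ hker
end

section
/- Let B be a field and G a group acting on B by ring automorphisms, and let M be a finite-dimensional B-vector space equipped with an action of G by additive automorphisms that is semilinear, i.e. g·(b·m) = (g·b)·(g·m) for all g ∈ G, b ∈ B, m ∈ M. Let B^G be the fixed field and M^G the set of G-fixed vectors, a B^G-subspace of M. Then the canonical B-linear map B ⊗_{B^G} M^G → M is injective; in particular dim_{B^G} M^G ≤ dim_B M. Equivalently, any family of elements of M^G that is linearly independent over B^G is linearly independent over B. -/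
/-!
Take a `B`-linear relation among `G`-fixed vectors with minimal support, normalised so that one
coefficient is `1`. Subtracting its `g`-translate (semilinearity keeps it a relation, and the
fixed vectors do not move) kills that coefficient, so by minimality every coefficient is
`g`-fixed: the relation is already over `B^G`. Hence `B^G`-independent fixed vectors stay
`B`-independent. The canonical map is the base change of the inclusion `M^G → M`; it sends the
`B`-basis `1 ⊗ eᵢ` coming from a `B^G`-basis `eᵢ` of `M^G` to the independent family `eᵢ`,
so it is injective, and comparing dimensions gives the inequality.
-/

open scoped TensorProduct

variable (B : Type*) [Field B] (G : Type*) [Group G] [MulSemiringAction G B]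
variable (M : Type*) [AddCommGroup M] [Module B M] [DistribMulAction G M]

/-- The fixed points `M^G`, as a submodule over the fixed field `B^G`; this requires the
`G`-action on `M` to be semilinear over the `G`-action on `B`. -/
def fixedPointsSubmodule
    (hsemi : ∀ (g : G) (b : B) (m : M), g • (b • m) = (g • b) • (g • m)) :
    Submodule (FixedPoints.subfield G B) M where
  carrier := {m : M | ∀ g : G, g • m = m}
  add_mem' := fun {a b} ha hb g => by rw [smul_add, ha g, hb g]
  zero_mem' := fun g => smul_zero g
  smul_mem' := fun c m hm g => by
    show g • ((c : B) • m) = (c : B) • m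
    rw [hsemi g (c : B) m, hm g, c.2 g]

/-- The canonical `B^G`-linear map `B ⊗_{B^G} M^G → M`, `b ⊗ m ↦ b • m`. -/
noncomputable def canonicalTensorMap
    (hsemi : ∀ (g : G) (b : B) (m : M), g • (b • m) = (g • b) • (g • m)) :
    B ⊗[FixedPoints.subfield G B] (fixedPointsSubmodule B G M hsemi) →ₗ[FixedPoints.subfield G B] M :=
  TensorProduct.lift
    { toFun := fun b =>
        { toFun := fun m => b • (m : M)
          map_add' := fun m m' => by simp [smul_add]
          map_smul' := fun c m => by
            show b • ((c : B) • (m : M)) = (c : B) • (b • (m : M))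
            rw [smul_comm] }
      map_add' := fun b b' => by
        ext m; show (b + b') • (m : M) = b • (m : M) + b' • (m : M); rw [add_smul]
      map_smul' := fun c b => by
        ext m
        show ((c : B) * b) • (m : M) = (c : B) • (b • (m : M))
        rw [mul_smul] }

theorem LinearMap.liftBaseChange_injective_of_linearIndependent {R A N P ι : Type*}
    [CommRing R] [CommRing A] [Algebra R A] [AddCommGroup N] [Module R N]
    [AddCommGroup P] [Module R P] [Module A P] [IsScalarTower R A P]
    (b : Module.Basis ι R N) (l : N →ₗ[R] P) (hl : LinearIndependent A (l ∘ b)) :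
    Function.Injective (l.liftBaseChange A) :=
  LinearMap.injective_of_linearIndependent (Algebra.TensorProduct.basis A b).span_eq
    (by simpa [Function.comp_def] using hl)

section FixedVectors

variable {B : Type*} [Field B] {G : Type*} [Monoid G] [MulSemiringAction G B]
  {M : Type*} [AddCommGroup M] [Module B M] [DistribMulAction G M] {ι : Type*} {v : ι → M}

theorem sum_smul_coeff_smul_eq_zero
    (hsemi : ∀ (g : G) (b : B) (m : M), g • (b • m) = (g • b) • (g • m))
    (hv : ∀ (i : ι) (g : G), g • v i = v i) {s : Finset ι} {c : ι → B}
    (hc : ∑ i ∈ s, c i • v i = 0) (g : G) : ∑ i ∈ s, (g • c i) • v i = 0 := by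
  simpa [Finset.smul_sum, hsemi, hv] using congrArg (g • ·) hc

theorem smul_coeff_eq_of_minimal_relation
    (hsemi : ∀ (g : G) (b : B) (m : M), g • (b • m) = (g • b) • (g • m))
    (hv : ∀ (i : ι) (g : G), g • v i = v i) {s : Finset ι} {c : ι → B} {j : ι}
    (hmin : ∀ t ⊂ s, ∀ f : ι → B, ∑ i ∈ t, f i • v i = 0 → ∀ i ∈ t, f i = 0)
    (hc : ∑ i ∈ s, c i • v i = 0) (hj : j ∈ s) (hcj : c j = 1) (g : G) :
    ∀ i ∈ s, g • c i = c i := by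
  classical
  have hdiff : ∑ i ∈ s.erase j, (g • c i - c i) • v i = 0 := by
    rw [Finset.sum_erase s (by simp [hcj])]
    simp only [sub_smul, Finset.sum_sub_distrib, sum_smul_coeff_smul_eq_zero hsemi hv hc, hc,
      sub_zero]
  intro i hi
  rcases eq_or_ne i j with rfl | hij
  · simp [hcj]
  · exact sub_eq_zero.mp
      (hmin _ (Finset.erase_ssubset hj) _ hdiff i (Finset.mem_erase.2 ⟨hij, hi⟩))

theorem linearIndependent_of_linearIndependent_fixedPoints
    (hsemi : ∀ (g : G) (b : B) (m : M), g • (b • m) = (g • b) • (g • m))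
    (hv : ∀ (i : ι) (g : G), g • v i = v i)
    (hK : LinearIndependent (FixedPoints.subfield G B) v) : LinearIndependent B v := by
  classical
  rw [linearIndependent_iff'] at hK ⊢
  intro s
  induction s using Finset.strongInduction with
  | H s ih =>
  intro f hf j hj
  by_contra hfj
  set c : ι → B := fun i => (f j)⁻¹ * f i
  have hcj : c j = 1 := inv_mul_cancel₀ hfj
  have hc : ∑ i ∈ s, c i • v i = 0 := by
    simp only [c, mul_smul, ← Finset.smul_sum, hf, smul_zero]
  have hfix := smul_coeff_eq_of_minimal_relation hsemi hv ih hc hj hcj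
  let C : ι → FixedPoints.subfield G B := fun i =>
    if h : i ∈ s then ⟨c i, fun g => hfix g i h⟩ else 0
  have hC : ∑ i ∈ s, C i • v i = 0 := by
    rw [← hc]
    refine Finset.sum_congr rfl fun i hi => ?_
    simp only [C, dif_pos hi]
    rfl
  simpa [C, hj, hcj] using congrArg Subtype.val (hK s C hC j hj)

end FixedVectors

theorem canonicalTensorMap_eq_liftBaseChange (B : Type*) [Field B] (G : Type*) [Group G]
    [MulSemiringAction G B] (M : Type*) [AddCommGroup M] [Module B M] [DistribMulAction G M]
    (hsemi : ∀ (g : G) (b : B) (m : M), g • (b • m) = (g • b) • (g • m)) :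
    canonicalTensorMap B G M hsemi =
      ((fixedPointsSubmodule B G M hsemi).subtype.liftBaseChange B).restrictScalars _ :=
  TensorProduct.ext' fun _ _ => rfl

/-- **Lemma 1.13**: let `B` be a field with a group `G` acting by ring automorphisms, and let
`M` be a finite-dimensional `B`-vector space with a semilinear `G`-action.  Then the canonical
`B`-linear map `B ⊗_{B^G} M^G → M` is injective; in particular
`dim_{B^G} M^G ≤ dim_B M`.  Equivalently, any family of elements of `M^G` linearly
independent over `B^G` is linearly independent over `B`. -/
theorem canonicalTensorMap_injective (B : Type*) [Field B] (G : Type*) [Group G]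
    [MulSemiringAction G B] (M : Type*) [AddCommGroup M] [Module B M] [DistribMulAction G M]
    [FiniteDimensional B M]
    (hsemi : ∀ (g : G) (b : B) (m : M), g • (b • m) = (g • b) • (g • m)) :
    Function.Injective (canonicalTensorMap B G M hsemi) ∧
    Module.finrank (FixedPoints.subfield G B) (fixedPointsSubmodule B G M hsemi)
      ≤ Module.finrank B M ∧
    ∀ (ι : Type*) (v : ι → M), (∀ (i : ι) (g : G), g • v i = v i) →
      LinearIndependent (FixedPoints.subfield G B) v → LinearIndependent B v := by
  set K := FixedPoints.subfield G B
  set N := fixedPointsSubmodule B G M hsemi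
  let e := Module.Basis.ofVectorSpace K N
  have hinj : Function.Injective (N.subtype.liftBaseChange B) :=
    N.subtype.liftBaseChange_injective_of_linearIndependent e
      (linearIndependent_of_linearIndependent_fixedPoints hsemi (fun i => (e i).2)
        (e.linearIndependent.map' N.subtype N.ker_subtype))
  refine ⟨by rw [canonicalTensorMap_eq_liftBaseChange]; exact hinj, ?_,
    fun _ _ => linearIndependent_of_linearIndependent_fixedPoints hsemi⟩
  calc Module.finrank K N = Module.finrank B (B ⊗[K] N) := Module.finrank_baseChange.symm
    _ ≤ Module.finrank B M := LinearMap.finrank_le_finrank_of_injective hinj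
end

section
/- Let R be a commutative ring, x ∈ R, and let α : M → M' be a morphism of R-modules whose kernel and cokernel are both killed by x (i.e. x·ker α = 0 and x·coker α = 0). Then for every R-module N, the kernel and cokernel of the morphism id_N ⊗ α : N ⊗_R M → N ⊗_R M' are killed by x². -/
/-!
Factor `α` as the surjection `π : M → range α` followed by the inclusion. Since `x • M' ⊆ range α`,
multiplication by `x` on `M'` factors through `range α`, so `x` maps the kernel of `id_N ⊗ α` into
the kernel of `id_N ⊗ π`. By right exactness of `N ⊗ -`, the latter is the image of
`N ⊗ ker α`, which is killed by `x`. On the cokernel side one factor `x` already suffices, since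
`x • (n ⊗ m') = n ⊗ x • m'` and `x • m' ∈ range α`.
-/

open scoped TensorProduct
open LinearMap

theorem Module.IsTorsionBy.tensorProduct {R P : Type*} [CommRing R] [AddCommGroup P] [Module R P]
    (N : Type*) [AddCommGroup N] [Module R N] {x : R} (h : Module.IsTorsionBy R P x) :
    Module.IsTorsionBy R (N ⊗[R] P) x := by
  intro u
  induction u using TensorProduct.induction_on with
  | zero => exact smul_zero x
  | tmul n p => rw [← TensorProduct.tmul_smul, h, TensorProduct.tmul_zero]
  | add u v hu hv => rw [smul_add, hu, hv, add_zero]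

section

variable {R : Type*} [CommRing R] (x : R) {M M' P : Type*}
  [AddCommGroup M] [AddCommGroup M'] [AddCommGroup P] [Module R M] [Module R M'] [Module R P]
  (N : Type*) [AddCommGroup N] [Module R N]

theorem smul_eq_zero_of_mem_ker_lTensor_of_surjective {f : M →ₗ[R] P}
    (hf : Function.Surjective f) (hker : ∀ m ∈ ker f, x • m = 0) :
    ∀ t ∈ ker (f.lTensor N), x • t = 0 := by
  intro t ht
  obtain ⟨u, rfl⟩ := (lTensor_exact N (exact_subtype_ker_map f) hf t).mp ht
  have hK : Module.IsTorsionBy R (ker f) x := fun ⦃m⦄ ↦ Subtype.ext (hker m m.2)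
  rw [← map_smul, hK.tensorProduct N, map_zero]

theorem smul_mem_ker_lTensor_rangeRestrict {f : M →ₗ[R] M'}
    (hcoker : ∀ m' : M', x • m' ∈ range f) :
    ∀ t ∈ ker (f.lTensor N), x • t ∈ ker (f.rangeRestrict.lTensor N) := by
  intro t ht
  let β : M' →ₗ[R] range f := codRestrict (range f) (x • LinearMap.id) hcoker
  have hβf : β ∘ₗ f = x • f.rangeRestrict := rfl
  rw [mem_ker, map_smul, ← LinearMap.smul_apply, ← lTensor_smul, ← hβf, lTensor_comp_apply,
    mem_ker.mp ht, map_zero]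

theorem smul_mem_range_lTensor {f : M →ₗ[R] M'} (hcoker : ∀ m' : M', x • m' ∈ range f) :
    ∀ t : N ⊗[R] M', x • t ∈ range (f.lTensor N) := by
  intro t
  induction t using TensorProduct.induction_on with
  | zero => rw [smul_zero]; exact zero_mem _
  | tmul n m' =>
    obtain ⟨m, hm⟩ := hcoker m'
    exact ⟨n ⊗ₜ m, by rw [lTensor_tmul, hm, TensorProduct.tmul_smul]⟩
  | add u v hu hv => rw [smul_add]; exact add_mem hu hv

end

/-- Claim in the proof of **Lemma 1.8(iii)**: let `R` be a commutative ring, `x ∈ R`, and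
`α : M → M'` a morphism of `R`-modules whose kernel and cokernel are killed by `x`.  Then for
every `R`-module `N`, the kernel and cokernel of `id_N ⊗ α : N ⊗_R M → N ⊗_R M'` are killed
by `x²`. -/
theorem lTensor_ker_coker_killed_by_sq
    (R : Type*) [CommRing R] (x : R)
    (M M' : Type*) [AddCommGroup M] [AddCommGroup M'] [Module R M] [Module R M']
    (α : M →ₗ[R] M')
    (hker : ∀ m ∈ LinearMap.ker α, x • m = 0)
    (hcoker : ∀ m' : M', x • m' ∈ LinearMap.range α)
    (N : Type*) [AddCommGroup N] [Module R N] :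
    (∀ t ∈ LinearMap.ker (LinearMap.lTensor N α), x ^ 2 • t = 0) ∧
      (∀ t : N ⊗[R] M', x ^ 2 • t ∈ LinearMap.range (LinearMap.lTensor N α)) := by
  refine ⟨fun t ht ↦ ?_, fun t ↦ ?_⟩
  · have hπ : ∀ m ∈ ker α.rangeRestrict, x • m = 0 := by
      rw [ker_rangeRestrict]
      exact hker
    rw [pow_two, mul_smul]
    exact smul_eq_zero_of_mem_ker_lTensor_of_surjective x N α.surjective_rangeRestrict hπ _
      (smul_mem_ker_lTensor_rangeRestrict x N hcoker t ht)
  · rw [pow_two, mul_smul]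
    exact Submodule.smul_mem _ x (smul_mem_range_lTensor x N hcoker t)
end

section
/- Let R be a commutative ring, x ∈ R, and let α : M → M' be a morphism of R-modules whose kernel and cokernel are both killed by x. Then for every q ∈ ℕ with q ≥ 1, the kernel and cokernel of the induced map α^{⊗q} : M^{⊗q} → M'^{⊗q} (the q-fold tensor power of α over R) are killed by x^{2q}. -/
open scoped TensorProduct

/-!
Since `x` kills the kernel of `α`, multiplication by `x` on `M` factors through `M ⧸ ker α ≃ range α`,
and since `x` kills the cokernel, multiplication by `x` on `M'` lands in `range α`. Composing gives
`β : M' → M` with `β ∘ α = x²` and `α ∘ β = x²`. Tensor powers are functorial and turn the scalar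
`x²` into `x^(2q)`, so `β^{⊗q} ∘ α^{⊗q} = x^(2q) = α^{⊗q} ∘ β^{⊗q}`, which kills kernel and cokernel.
-/

namespace LinearMap

variable {R M N : Type*} [CommRing R] [AddCommGroup M] [AddCommGroup N] [Module R M] [Module R N]

theorem exists_comp_eq_smul_id_of_smul_ker_eq_zero_of_smul_mem_range {f : M →ₗ[R] N} {x : R}
    (hker : ∀ m ∈ ker f, x • m = 0) (hcoker : ∀ n, x • n ∈ range f) :
    ∃ g : N →ₗ[R] M, g ∘ₗ f = x ^ 2 • id ∧ f ∘ₗ g = x ^ 2 • id := by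
  have hle : ker f ≤ ker (x • id) := fun m hm => by simpa using hker m hm
  let g : N →ₗ[R] M := (ker f).liftQ (x • id) hle ∘ₗ
    f.quotKerEquivRange.symm.toLinearMap ∘ₗ (x • id).codRestrict (range f) hcoker
  refine ⟨g, ext fun m => ?_, ext fun n => ?_⟩
  · have hm : f.quotKerEquivRange.symm ⟨x • f m, hcoker (f m)⟩ = (ker f).mkQ (x • m) := by
      rw [LinearEquiv.symm_apply_eq]; ext; simp
    change (ker f).liftQ _ hle (f.quotKerEquivRange.symm ⟨x • f m, _⟩) = _
    simp [hm, pow_two, mul_smul]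
  · obtain ⟨m, hm⟩ := (ker f).mkQ_surjective (f.quotKerEquivRange.symm ⟨x • n, hcoker n⟩)
    have hfm : f m = x • n := by
      simpa using congrArg Subtype.val (f.quotKerEquivRange.eq_symm_apply.mp hm)
    change f ((ker f).liftQ _ hle (f.quotKerEquivRange.symm ⟨x • n, _⟩)) = _
    simp [← hm, hfm, pow_two, mul_smul]

end LinearMap

namespace PiTensorProduct

variable {R ι : Type*} [CommSemiring R] [Fintype ι] {s t : ι → Type*}
  [∀ i, AddCommMonoid (s i)] [∀ i, Module R (s i)] [∀ i, AddCommMonoid (t i)] [∀ i, Module R (t i)]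

theorem map_smul_id (c : R) :
    map (fun i => c • LinearMap.id (R := R) (M := s i)) = c ^ Fintype.card ι • LinearMap.id := by
  classical
  rw [← map_id, ← Finset.card_univ, ← Finset.prod_const]
  exact (mapMultilinear R s s).map_smul_univ (fun _ => c) (fun _ => LinearMap.id)

theorem map_comp_map_eq_smul_id {f : Π i, s i →ₗ[R] t i} {g : Π i, t i →ₗ[R] s i} {c : R}
    (h : ∀ i, g i ∘ₗ f i = c • LinearMap.id) :
    map g ∘ₗ map f = c ^ Fintype.card ι • LinearMap.id := by
  rw [← map_comp, funext h, map_smul_id]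

end PiTensorProduct

open PiTensorProduct in
theorem tensorPower_ker_coker_killed_general
    (R : Type*) [CommRing R] (x : R)
    (M M' : Type*) [AddCommGroup M] [AddCommGroup M'] [Module R M] [Module R M']
    (α : M →ₗ[R] M')
    (hker : ∀ m ∈ LinearMap.ker α, x • m = 0)
    (hcoker : ∀ m' : M', x • m' ∈ LinearMap.range α)
    (q : ℕ) :
    (∀ t ∈ LinearMap.ker (PiTensorProduct.map fun _ : Fin q => α), x ^ (2 * q) • t = 0) ∧
      (∀ t : ⨂[R] (_ : Fin q), M',
        x ^ (2 * q) • t ∈ LinearMap.range (PiTensorProduct.map fun _ : Fin q => α)) := by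
  obtain ⟨β, hβα, hαβ⟩ :=
    α.exists_comp_eq_smul_id_of_smul_ker_eq_zero_of_smul_mem_range hker hcoker
  have hpow : (x ^ 2) ^ Fintype.card (Fin q) = x ^ (2 * q) := by rw [Fintype.card_fin, pow_mul]
  have hβαq := map_comp_map_eq_smul_id (ι := Fin q) fun _ => hβα
  have hαβq := map_comp_map_eq_smul_id (ι := Fin q) fun _ => hαβ
  rw [hpow] at hβαq hαβq
  refine ⟨fun t ht => ?_, fun t => ⟨map (fun _ => β) t, ?_⟩⟩
  · simpa [LinearMap.mem_ker.mp ht] using (LinearMap.congr_fun hβαq t).symm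
  · simpa using LinearMap.congr_fun hαβq t

/-- Claim in the proof of **Lemma 1.8(iii)**: let `R` be a commutative ring, `x ∈ R`, and
`α : M → M'` a morphism of `R`-modules whose kernel and cokernel are killed by `x`.  Then for
every `q ≥ 1`, the kernel and cokernel of the induced map `α^{⊗q} : M^{⊗q} → M'^{⊗q}` on
`q`-fold tensor powers over `R` are killed by `x^(2q)`. -/
theorem tensorPower_ker_coker_killed
    (R : Type*) [CommRing R] (x : R)
    (M M' : Type*) [AddCommGroup M] [AddCommGroup M'] [Module R M] [Module R M']
    (α : M →ₗ[R] M')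
    (hker : ∀ m ∈ LinearMap.ker α, x • m = 0)
    (hcoker : ∀ m' : M', x • m' ∈ LinearMap.range α)
    (q : ℕ) (hq : 1 ≤ q) :
    (∀ t ∈ LinearMap.ker (PiTensorProduct.map fun _ : Fin q => α), x ^ (2 * q) • t = 0) ∧
      (∀ t : ⨂[R] (_ : Fin q), M',
        x ^ (2 * q) • t ∈ LinearMap.range (PiTensorProduct.map fun _ : Fin q => α)) :=
  tensorPower_ker_coker_killed_general R x M M' α hker hcoker q
end
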